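/- Let τ ≠ 0 and H, κ, β, β₁, β₁₁, β₁₁₁ be real numbers with cosβ ≠ 0. Set m := 1 + H²/τ², K := κ − 4τ², C := sinβ, Q := 2m(τ+β₁)² and G := 2m²[β₁₁² + 4(τ+β₁)²(2τ+β₁)²tan²β]. Assume m·β₁₁ = −2m(τ+β₁)(2τ+β₁)tanβ − K·sinβ·cosβ and m·β₁₁₁ = 4m(3τ+2β₁)(τ+β₁)(2τ+β₁)tan²β + 2K(3τ+2β₁)sin²β − 2m(τ+β₁)(2τ+β₁)(1/cos²β)β₁ − K·cos(2β)·β₁. Then (1/2)·4m²[β₁₁² + (τ+β₁)β₁₁₁ + (2τ+β₁)(τ+β₁)tanβ·β₁₁] − Km·2τ(β₁cos²β + 2τ·sin²β) = G − Q(Q − 2(H²+τ²)) + K[Q(5C²−1) − 2(H²+τ²)(3C²−1)]. -/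
import Mathlib


theorem stmt_18 (τ H κ β β₁ β₁₁ β₁₁₁ : ℝ) (hτ : τ ≠ 0) (hβ : Real.cos β ≠ 0)
    (m K C Q G : ℝ) (hm : m = 1 + H ^ 2 / τ ^ 2) (hK : K = κ - 4 * τ ^ 2)
    (hC : C = Real.sin β)
    (hQ : Q = 2 * m * (τ + β₁) ^ 2)
    (hG : G = 2 * m ^ 2 * (β₁₁ ^ 2
        + 4 * (τ + β₁) ^ 2 * (2 * τ + β₁) ^ 2 * Real.tan β ^ 2))
    (h34 : m * β₁₁
      = -2 * m * (τ + β₁) * (2 * τ + β₁) * Real.tan β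
        - K * Real.sin β * Real.cos β)
    (h35 : m * β₁₁₁
      = 4 * m * (3 * τ + 2 * β₁) * (τ + β₁) * (2 * τ + β₁) * Real.tan β ^ 2
        + 2 * K * (3 * τ + 2 * β₁) * Real.sin β ^ 2
        - 2 * m * (τ + β₁) * (2 * τ + β₁) * (1 / Real.cos β ^ 2) * β₁
        - K * Real.cos (2 * β) * β₁) :
    (1 / 2) * (4 * m ^ 2 * (β₁₁ ^ 2 + (τ + β₁) * β₁₁₁
        + (2 * τ + β₁) * (τ + β₁) * Real.tan β * β₁₁))
      - K * m * (2 * τ * (β₁ * Real.cos β ^ 2 + 2 * τ * Real.sin β ^ 2))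
    = G - Q * (Q - 2 * (H ^ 2 + τ ^ 2))
      + K * (Q * (5 * C ^ 2 - 1)
          - 2 * (H ^ 2 + τ ^ 2) * (3 * C ^ 2 - 1)) := by
  subst hC hQ hG
  rw [Real.cos_two_mul] at h35
  have htan : Real.tan β * Real.cos β = Real.sin β := Real.tan_mul_cos hβ
  have hI : (1 / Real.cos β ^ 2) * Real.cos β ^ 2 = 1 := by
    field_simp
  have hem : m * τ ^ 2 = τ ^ 2 + H ^ 2 := by
    rw [hm]; field_simp
  have hp : Real.sin β ^ 2 + Real.cos β ^ 2 = 1 := Real.sin_sq_add_cos_sq β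
  set s := Real.sin β
  set c := Real.cos β
  set T := Real.tan β
  apply mul_left_cancel₀ (pow_ne_zero 2 hβ)
  linear_combination
    (2 * m * (τ + β₁) * c ^ 2) * h35
    + (2 * m * (τ + β₁) * (2 * τ + β₁) * c ^ 2 * T) * h34
    + (4 * m ^ 2 * β₁ * (β₁ + τ) ^ 2 * (β₁ + 2 * τ) * (c * T + s)
        - (2 * K * m * β₁ ^ 2 + 6 * τ * K * m * β₁ + 4 * τ ^ 2 * K * m)
          * s * c ^ 2) * htan
    + (-(4 * m ^ 2 * β₁ * (β₁ + τ) ^ 2 * (β₁ + 2 * τ))) * hI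
    + (4 * m * (β₁ + τ) ^ 2 * c ^ 2 + 2 * K * c ^ 2 - 6 * K * s ^ 2 * c ^ 2)
        * hem
    + (4 * m ^ 2 * β₁ * (β₁ + τ) ^ 2 * (β₁ + 2 * τ)
        - (4 * K * m * β₁ ^ 2 + 6 * τ * K * m * β₁) * c ^ 2) * hp
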